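/- Let n ≥ 2 and let G be a simple graph on Fin n. The set Σ(G) = {σ : Perm (Fin n) | M_σ '' S(G) = S(G)} is a subgroup of the symmetric group on Fin n, and the automorphism group of G is isomorphic to this subgroup; in particular the number of automorphisms of G equals the cardinality of Σ(G) (the order of the symmetry group of the point-set form). -/

import Mathlib

/-- The centered standard simplex vertices: `s i = e_i - (1/n) • ∑ j, e_j`,
where `e_i` is the standard basis of `EuclideanSpace ℝ (Fin n)`. -/
noncomputable def simplexPt (n : ℕ) (i : Fin n) : EuclideanSpace ℝ (Fin n) :=
  EuclideanSpace.single i (1 : ℝ) - ((1 : ℝ) / n) • ∑ j, EuclideanSpace.single j (1 : ℝ)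

/-- The coordinate-permutation map `M_σ` (the permutation matrix of `σ`), as a linear
isometry equivalence of `EuclideanSpace ℝ (Fin n)`. -/
noncomputable def Mperm (n : ℕ) (σ : Equiv.Perm (Fin n)) :
    EuclideanSpace ℝ (Fin n) ≃ₗᵢ[ℝ] EuclideanSpace ℝ (Fin n) :=
  LinearIsometryEquiv.piLpCongrLeft 2 ℝ ℝ σ

/-- The point-set form of a simple graph `G` on `Fin n`:
`S(G) = {s i : i} ∪ {(s i + s j)/2 : G.Adj i j}`. -/
noncomputable def pointSet (n : ℕ) (G : SimpleGraph (Fin n)) :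
    Set (EuclideanSpace ℝ (Fin n)) :=
  Set.range (simplexPt n) ∪
    {p | ∃ i j : Fin n, G.Adj i j ∧ p = (2 : ℝ)⁻¹ • (simplexPt n i + simplexPt n j)}

/-!
`M_σ` maps `s i` to `s (σ i)`, so it carries `S(G)` onto `S(σ G)`, the point-set form of the
image graph. The coordinates of a point of `S(G)` exceed `-1/n` exactly at the vertices the point
is built from, so a midpoint is never a vertex and determines its edge: `G ↦ S(G)` is injective.
Hence `σ` preserves `S(G)` iff `σ G = G`, i.e. iff `σ` is the underlying permutation of an
automorphism, and `Σ(G)` is the image of `Aut G` under its faithful action on `Fin n`.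
-/

open SimpleGraph

noncomputable def simplexMid (n : ℕ) (i j : Fin n) : EuclideanSpace ℝ (Fin n) :=
  (2 : ℝ)⁻¹ • (simplexPt n i + simplexPt n j)

lemma mem_pointSet {n : ℕ} {G : SimpleGraph (Fin n)} {p : EuclideanSpace ℝ (Fin n)} :
    p ∈ pointSet n G ↔ (∃ i, simplexPt n i = p) ∨ ∃ i j, G.Adj i j ∧ p = simplexMid n i j :=
  Iff.rfl

section Coordinates

variable {n : ℕ}

lemma simplexPt_apply (i k : Fin n) :
    simplexPt n i k = (if k = i then 1 else 0) - 1 / n := by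
  simp [simplexPt, PiLp.single_apply, WithLp.ofLp_sum, Finset.sum_apply]

lemma simplexMid_apply (i j k : Fin n) :
    simplexMid n i j k = ((if k = i then 1 else 0) + (if k = j then 1 else 0)) / 2 - 1 / n := by
  simp only [simplexMid, PiLp.smul_apply, PiLp.add_apply, simplexPt_apply, smul_eq_mul]
  ring

lemma neg_inv_lt_simplexPt_apply_iff (i k : Fin n) :
    -(1 / n : ℝ) < simplexPt n i k ↔ k = i := by
  rw [simplexPt_apply]
  split_ifs with h <;> simp [h]

lemma neg_inv_lt_simplexMid_apply_iff (i j k : Fin n) :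
    -(1 / n : ℝ) < simplexMid n i j k ↔ k = i ∨ k = j := by
  rw [simplexMid_apply]
  split_ifs with hi hj hj <;> simp [hi, hj]

lemma simplexMid_ne_simplexPt {i j : Fin n} (hij : i ≠ j) (k : Fin n) :
    simplexMid n i j ≠ simplexPt n k := by
  intro h
  have key (m : Fin n) : m = i ∨ m = j ↔ m = k := by
    rw [← neg_inv_lt_simplexMid_apply_iff, ← neg_inv_lt_simplexPt_apply_iff, h]
  exact hij (((key i).1 (.inl rfl)).trans ((key j).1 (.inr rfl)).symm)

lemma simplexMid_eq_simplexMid_iff {i j k l : Fin n} :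
    simplexMid n i j = simplexMid n k l ↔ s(i, j) = s(k, l) := by
  refine ⟨fun h => Sym2.ext fun m => ?_, fun h => ?_⟩
  · simp only [Sym2.mem_iff]
    rw [← neg_inv_lt_simplexMid_apply_iff, ← neg_inv_lt_simplexMid_apply_iff, h]
  · rcases Sym2.eq_iff.1 h with ⟨rfl, rfl⟩ | ⟨rfl, rfl⟩
    · rfl
    · rw [simplexMid, simplexMid, add_comm]

end Coordinates

lemma simplexMid_mem_pointSet_iff {n : ℕ} {G : SimpleGraph (Fin n)} {i j : Fin n} (hij : i ≠ j) :
    simplexMid n i j ∈ pointSet n G ↔ G.Adj i j := by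
  refine ⟨?_, fun h => .inr ⟨i, j, h, rfl⟩⟩
  rintro (⟨k, hk⟩ | ⟨k, l, hkl, h⟩)
  · exact absurd hk.symm (simplexMid_ne_simplexPt hij k)
  · rwa [← mem_edgeSet, simplexMid_eq_simplexMid_iff.1 h]

lemma pointSet_injective (n : ℕ) : Function.Injective (pointSet n) := by
  intro G G' h
  ext i j
  by_cases hij : i = j
  · simp [hij]
  · rw [← simplexMid_mem_pointSet_iff hij, h, simplexMid_mem_pointSet_iff hij]

section Permutation

variable {n : ℕ} (σ : Equiv.Perm (Fin n))

lemma Mperm_simplexPt (i : Fin n) : Mperm n σ (simplexPt n i) = simplexPt n (σ i) := by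
  simp only [Mperm, simplexPt, map_sub, map_smul, map_sum, EuclideanSpace.piLpCongrLeft_single]
  rw [Equiv.sum_comp σ fun j => EuclideanSpace.single j (1 : ℝ)]

lemma Mperm_simplexMid (i j : Fin n) :
    Mperm n σ (simplexMid n i j) = simplexMid n (σ i) (σ j) := by
  rw [simplexMid, simplexMid, map_smul, map_add, Mperm_simplexPt, Mperm_simplexPt]

lemma image_Mperm_pointSet (G : SimpleGraph (Fin n)) :
    Mperm n σ '' pointSet n G = pointSet n (G.map σ) := by
  ext p
  simp only [Set.mem_image, mem_pointSet, map_adj']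
  constructor
  · rintro ⟨q, ⟨i, rfl⟩ | ⟨i, j, h, rfl⟩, rfl⟩
    · exact .inl ⟨σ i, (Mperm_simplexPt σ i).symm⟩
    · exact .inr ⟨σ i, σ j, ⟨σ.injective.ne h.ne, i, j, h, rfl, rfl⟩, Mperm_simplexMid σ i j⟩
  · rintro (⟨i, rfl⟩ | ⟨_, _, ⟨-, i, j, h, rfl, rfl⟩, rfl⟩)
    · exact ⟨simplexPt n (σ.symm i), .inl ⟨_, rfl⟩, by rw [Mperm_simplexPt, σ.apply_symm_apply]⟩
    · exact ⟨simplexMid n i j, .inr ⟨i, j, h, rfl⟩, Mperm_simplexMid σ i j⟩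

end Permutation

lemma map_eq_self_iff_mem_range_toPermHom {V : Type*} (G : SimpleGraph V) (σ : Equiv.Perm V) :
    G.map σ = G ↔ σ ∈ (MulAction.toPermHom (G ≃g G) V).range := by
  constructor
  · intro h
    refine ⟨⟨σ, fun {a b} => ?_⟩, rfl⟩
    have := map_adj_apply (G := G) (f := σ.toEmbedding) (a := a) (b := b)
    rwa [Equiv.coe_toEmbedding, h] at this
  · rintro ⟨φ, rfl⟩
    ext u v
    change (G.map φ).Adj u v ↔ G.Adj u v
    refine ⟨?_, fun h => ⟨h.ne, φ.symm u, φ.symm v, φ.symm.map_adj_iff.2 h, ?_, ?_⟩⟩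
    · rintro ⟨-, a, b, h, rfl, rfl⟩
      exact φ.map_adj_iff.2 h
    all_goals exact φ.apply_symm_apply _

theorem symmetry_group_of_pointSet_general
    (n : ℕ) (G : SimpleGraph (Fin n)) :
    ∃ H : Subgroup (Equiv.Perm (Fin n)),
      (H : Set (Equiv.Perm (Fin n))) = {σ | Mperm n σ '' pointSet n G = pointSet n G} ∧
      Nonempty ((G ≃g G) ≃* H) ∧
      Nat.card (G ≃g G) = Nat.card {σ : Equiv.Perm (Fin n) |
        Mperm n σ '' pointSet n G = pointSet n G} := by
  set f := MulAction.toPermHom (G ≃g G) (Fin n)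
  have hH : (f.range : Set (Equiv.Perm (Fin n))) =
      {σ | Mperm n σ '' pointSet n G = pointSet n G} := by
    ext σ
    rw [Set.mem_ofPred_eq, image_Mperm_pointSet, (pointSet_injective n).eq_iff,
      map_eq_self_iff_mem_range_toPermHom, SetLike.mem_coe]
  let e := MonoidHom.ofInjective (f := f) MulAction.toPerm_injective
  exact ⟨f.range, hH, ⟨e⟩, Nat.card_congr (e.toEquiv.trans (Equiv.setCongr hH))⟩

theorem symmetry_group_of_pointSet
    (n : ℕ) (hn : 2 ≤ n) (G : SimpleGraph (Fin n)) :
    ∃ H : Subgroup (Equiv.Perm (Fin n)),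
      (H : Set (Equiv.Perm (Fin n))) = {σ | Mperm n σ '' pointSet n G = pointSet n G} ∧
      Nonempty ((G ≃g G) ≃* H) ∧
      Nat.card (G ≃g G) = Nat.card {σ : Equiv.Perm (Fin n) |
        Mperm n σ '' pointSet n G = pointSet n G} :=
  symmetry_group_of_pointSet_general n G
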